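/- Let U ⊆ ℝ³ be open with coordinates (x⁰, x¹, x²) = (t, x₁, x₂), let η, v¹, v² be C¹ functions on U with η > 0, set h = η², and let g be the acoustical metric field g₀₀ = −η² + (v¹)² + (v²)², g₀ᵢ = gᵢ₀ = −v^i, g_{ij} = δ_{ij}, with pointwise inverse g^{αβ}, Christoffel symbols Γ^γ_{αβ} = ½ g^{γδ}(∂_α g_{βδ} + ∂_β g_{αδ} − ∂_δ g_{αβ}), and wave operator □_g f = g^{αβ} ∂_α ∂_β f − g^{αβ} Γ^γ_{αβ} ∂_γ f. Then for every C² function f on U: □_g f = −η^{−2} B²f + Δf − η^{−2} (div v) Bf + ½ η^{−2} g^{αβ} ∂_α f ∂_β h + η^{−4} (Bf)(Bh), where B = ∂_t + v¹∂₁ + v²∂₂, Δ = ∂₁² + ∂₂², and div v = ∂₁v¹ + ∂₂v². -/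

import Mathlib

/-- Partial derivative in the `i`-th coordinate direction of spacetime
`ℝ³ ≃ (Fin 3 → ℝ)`, coordinates `(x⁰, x¹, x²) = (t, x₁, x₂)`. -/
noncomputable def pd (i : Fin 3) (f : (Fin 3 → ℝ) → ℝ) (x : Fin 3 → ℝ) : ℝ :=
  fderiv ℝ f x (Pi.single i 1)

/-- Material derivative `B = ∂ₜ + v¹∂₁ + v²∂₂`. -/
noncomputable def matD (v1 v2 f : (Fin 3 → ℝ) → ℝ) (x : Fin 3 → ℝ) : ℝ :=
  pd 0 f x + v1 x * pd 1 f x + v2 x * pd 2 f x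

/-- The acoustical metric field `g₀₀ = −η² + |v|²`, `g₀ᵢ = gᵢ₀ = −vⁱ`, `g_{ij} = δ_{ij}`. -/
noncomputable def gMat (η v1 v2 : (Fin 3 → ℝ) → ℝ) (x : Fin 3 → ℝ) :
    Matrix (Fin 3) (Fin 3) ℝ :=
  !![-(η x) ^ 2 + (v1 x) ^ 2 + (v2 x) ^ 2, -(v1 x), -(v2 x);
     -(v1 x), 1, 0;
     -(v2 x), 0, 1]

/-- Pointwise inverse `g^{αβ}` of the acoustical metric. -/
noncomputable def gInv (η v1 v2 : (Fin 3 → ℝ) → ℝ) (x : Fin 3 → ℝ) :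
    Matrix (Fin 3) (Fin 3) ℝ :=
  (gMat η v1 v2 x)⁻¹

/-- Christoffel symbols of the first kind
`Γ_{αβγ} = ½(∂_α g_{βγ} + ∂_β g_{αγ} − ∂_γ g_{αβ})` of the acoustical metric. -/
noncomputable def Γfst (η v1 v2 : (Fin 3 → ℝ) → ℝ) (α β γ : Fin 3) (x : Fin 3 → ℝ) : ℝ :=
  (pd α (fun y => gMat η v1 v2 y β γ) x + pd β (fun y => gMat η v1 v2 y α γ) x
    - pd γ (fun y => gMat η v1 v2 y α β) x) / 2

/-- Christoffel symbols of the second kind `Γ^γ_{αβ} = g^{γδ} Γ_{αβδ}`. -/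
noncomputable def Γsnd (η v1 v2 : (Fin 3 → ℝ) → ℝ) (γ α β : Fin 3) (x : Fin 3 → ℝ) : ℝ :=
  ∑ d : Fin 3, gInv η v1 v2 x γ d * Γfst η v1 v2 α β d x

/-- Wave operator `□_g f = g^{αβ} ∂_α ∂_β f − g^{αβ} Γ^γ_{αβ} ∂_γ f` of the acoustical
metric. -/
noncomputable def box (η v1 v2 f : (Fin 3 → ℝ) → ℝ) (x : Fin 3 → ℝ) : ℝ :=
  (∑ α : Fin 3, ∑ β : Fin 3, gInv η v1 v2 x α β * pd α (pd β f) x)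
    - ∑ α : Fin 3, ∑ β : Fin 3, ∑ γ : Fin 3,
        gInv η v1 v2 x α β * Γsnd η v1 v2 γ α β x * pd γ f x

/-!
The inverse of the acoustical metric is `g⁻¹ = −η⁻² B ⊗ B + diag(0, 1, 1)` with `B = (1, v¹, v²)`,
so `g^{αβ} ∂_α ∂_β f = −η⁻² Bᵅ Bᵝ ∂_α ∂_β f + Δf`, and `Bᵅ Bᵝ ∂_α ∂_β f` differs from `B²f` only by
the first-order terms `(B vⁱ) ∂ᵢ f`. The derivatives of the metric entries are explicit in `η`, `v`
and their first derivatives, so both sides of the identity become rational functions of the values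
at the point of `η`, `v`, their first derivatives and the first and second derivatives of `f`,
with powers of `η` as denominators; these agree once the mixed second derivatives of `f` are
identified (Schwarz).
-/

section PartialDerivatives

variable {f g : (Fin 3 → ℝ) → ℝ} {x : Fin 3 → ℝ} {i j : Fin 3}

lemma pd_const (c : ℝ) : pd i (fun _ => c) x = 0 := by simp [pd]

lemma pd_add (hf : DifferentiableAt ℝ f x) (hg : DifferentiableAt ℝ g x) :
    pd i (fun y => f y + g y) x = pd i f x + pd i g x := by
  simp [pd, fderiv_fun_add hf hg]

lemma pd_neg : pd i (fun y => -f y) x = -pd i f x := by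
  simp [pd]

lemma pd_mul (hf : DifferentiableAt ℝ f x) (hg : DifferentiableAt ℝ g x) :
    pd i (fun y => f y * g y) x = f x * pd i g x + pd i f x * g x := by
  simp [pd, fderiv_fun_mul hf hg]
  ring

lemma pd_sq (hf : DifferentiableAt ℝ f x) :
    pd i (fun y => f y ^ 2) x = 2 * f x * pd i f x := by
  simp only [sq, pd_mul hf hf]
  ring

lemma ContDiffAt.differentiableAt_pd (hf : ContDiffAt ℝ 2 f x) :
    DifferentiableAt ℝ (pd i f) x :=
  ((hf.fderiv_right (m := 1) (by norm_num)).differentiableAt (by norm_num)).clm_apply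
    (differentiableAt_const _)

lemma ContDiffAt.pd_pd_comm (hf : ContDiffAt ℝ 2 f x) :
    pd i (pd j f) x = pd j (pd i f) x := by
  have hf' : DifferentiableAt ℝ (fderiv ℝ f) x :=
    (hf.fderiv_right (m := 1) (by norm_num)).differentiableAt (by norm_num)
  unfold pd
  simp only [fderiv_clm_apply hf' (differentiableAt_const _)]
  simpa using hf.isSymmSndFDerivAt (by norm_num) (Pi.single i 1) (Pi.single j 1)

lemma pd_matD {v1 v2 : (Fin 3 → ℝ) → ℝ} (hv1 : DifferentiableAt ℝ v1 x)
    (hv2 : DifferentiableAt ℝ v2 x) (hf : ContDiffAt ℝ 2 f x) (k : Fin 3) :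
    pd k (matD v1 v2 f) x =
      pd k (pd 0 f) x + (v1 x * pd k (pd 1 f) x + pd k v1 x * pd 1 f x)
        + (v2 x * pd k (pd 2 f) x + pd k v2 x * pd 2 f x) := by
  have hpd : ∀ j, DifferentiableAt ℝ (pd j f) x := fun _ => hf.differentiableAt_pd
  rw [show matD v1 v2 f = fun y => pd 0 f y + v1 y * pd 1 f y + v2 y * pd 2 f y from rfl,
    pd_add ((hpd 0).fun_add (hv1.fun_mul (hpd 1))) (hv2.fun_mul (hpd 2)),
    pd_add (hpd 0) (hv1.fun_mul (hpd 1)), pd_mul hv1 (hpd 1), pd_mul hv2 (hpd 2)]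

end PartialDerivatives

section AcousticalMetric

variable {η v1 v2 : (Fin 3 → ℝ) → ℝ} {x : Fin 3 → ℝ}

lemma gInv_eq (hη : η x ≠ 0) :
    gInv η v1 v2 x = -(η x ^ 2)⁻¹ • Matrix.vecMulVec ![1, v1 x, v2 x] ![1, v1 x, v2 x]
      + Matrix.diagonal ![0, 1, 1] := by
  apply Matrix.inv_eq_right_inv
  ext i j
  fin_cases i <;> fin_cases j <;>
    simp [gMat, Matrix.mul_apply, Fin.sum_univ_three, Matrix.diagonal_apply] <;>
    field_simp <;> ring

lemma pd_gMat_apply (hη : DifferentiableAt ℝ η x) (hv1 : DifferentiableAt ℝ v1 x)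
    (hv2 : DifferentiableAt ℝ v2 x) (k α β : Fin 3) :
    pd k (fun y => gMat η v1 v2 y α β) x =
      !![-(2 * η x * pd k η x) + 2 * v1 x * pd k v1 x + 2 * v2 x * pd k v2 x,
          -pd k v1 x, -pd k v2 x;
        -pd k v1 x, 0, 0;
        -pd k v2 x, 0, 0] α β := by
  have h00 : pd k (fun y => -η y ^ 2 + v1 y ^ 2 + v2 y ^ 2) x =
      -(2 * η x * pd k η x) + 2 * v1 x * pd k v1 x + 2 * v2 x * pd k v2 x := by
    rw [pd_add (((hη.fun_pow 2).fun_neg).fun_add (hv1.fun_pow 2)) (hv2.fun_pow 2),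
      pd_add ((hη.fun_pow 2).fun_neg) (hv1.fun_pow 2), pd_neg, pd_sq hη, pd_sq hv1, pd_sq hv2]
  fin_cases α <;> fin_cases β <;> simp [gMat, pd_const, pd_neg, h00]

end AcousticalMetric

/-- Decomposition of the acoustical wave operator: for any `C²` function `f`,
`□_g f = −η⁻² B²f + Δf − η⁻² (div v) Bf + ½ η⁻² g^{αβ} ∂_α f ∂_β h + η⁻⁴ (Bf)(Bh)`,
with `h = η²`, `B = ∂ₜ + v¹∂₁ + v²∂₂`, `Δ = ∂₁² + ∂₂²`, `div v = ∂₁v¹ + ∂₂v²`. -/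
theorem acoustical_wave_operator_decomposition
    (U : Set (Fin 3 → ℝ)) (hU : IsOpen U)
    (η v1 v2 : (Fin 3 → ℝ) → ℝ)
    (hη : ContDiffOn ℝ 1 η U) (hv1 : ContDiffOn ℝ 1 v1 U) (hv2 : ContDiffOn ℝ 1 v2 U)
    (hpos : ∀ x ∈ U, 0 < η x) :
    ∀ f : (Fin 3 → ℝ) → ℝ, ContDiffOn ℝ 2 f U → ∀ x ∈ U,
      box η v1 v2 f x
        = -(η x ^ 2)⁻¹ * matD v1 v2 (matD v1 v2 f) x
          + (pd 1 (pd 1 f) x + pd 2 (pd 2 f) x)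
          - (η x ^ 2)⁻¹ * (pd 1 v1 x + pd 2 v2 x) * matD v1 v2 f x
          + (1 / 2) * (η x ^ 2)⁻¹
              * ∑ α : Fin 3, ∑ β : Fin 3,
                  gInv η v1 v2 x α β * pd α f x * pd β (fun y => η y ^ 2) x
          + (η x ^ 4)⁻¹ * matD v1 v2 f x * matD v1 v2 (fun y => η y ^ 2) x := by
  intro f hf x hx
  have hxU : U ∈ nhds x := hU.mem_nhds hx
  have hηx := (hη.contDiffAt hxU).differentiableAt one_ne_zero
  have hv1x := (hv1.contDiffAt hxU).differentiableAt one_ne_zero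
  have hv2x := (hv2.contDiffAt hxU).differentiableAt one_ne_zero
  have hη0 : η x ≠ 0 := (hpos x hx).ne'
  have hfx : ContDiffAt ℝ 2 f x := hf.contDiffAt hxU
  simp only [box, Γsnd, Γfst, matD, Fin.sum_univ_three, gInv_eq hη0, pd_gMat_apply hηx hv1x hv2x,
    pd_matD hv1x hv2x hfx, pd_sq hηx, Matrix.add_apply, Matrix.smul_apply, Matrix.vecMulVec_apply,
    Matrix.diagonal_apply, Matrix.of_apply, Matrix.cons_val_zero, Matrix.cons_val_one,
    Matrix.cons_val_two, Matrix.head_cons, Matrix.tail_cons, Fin.reduceEq, if_true, if_false,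
    smul_eq_mul]
  rw [hfx.pd_pd_comm (i := 1) (j := 0), hfx.pd_pd_comm (i := 2) (j := 0),
    hfx.pd_pd_comm (i := 2) (j := 1)]
  field_simp
  ring
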